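/- arXiv:1809.04363 — 2 statements merged into one kernel-verified Lean document; each statement's English description precedes it below -/
import Mathlib

section
/- Let H = [0,1]^N be the unit hypercube and H_V = {0,1}^N its vertex set. For any two vertices x_k, x_j ∈ H_V, the set B_kj = {x ∈ H : x_k·x = x_j·x} equals the convex hull of H_kj = {h ∈ H_V : x_k·h = x_j·h}. -/
/-- Standard inner product on `Fin N → ℝ`. -/
noncomputable def dotp {N : ℕ} (a b : Fin N → ℝ) : ℝ := ∑ i, a i * b i

/-- The unit hypercube `[0,1]^N`. -/
def unitCube (N : ℕ) : Set (Fin N → ℝ) := {x | ∀ i, x i ∈ Set.Icc (0:ℝ) 1}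

/-- Vertices of the unit hypercube: 0/1-valued vectors. -/
def cubeVerts (N : ℕ) : Set (Fin N → ℝ) := {x | ∀ i, x i = 0 ∨ x i = 1}

/-!
With `c = xk - xj ∈ {-1, 0, 1}^N`, the slice `B = {x ∈ [0,1]^N | c ⬝ᵥ x = 0}` is compact and
convex, so by Krein–Milman it is the closed convex hull of its extreme points, and it suffices to
show that every extreme point is a vertex of the cube. If `x ∈ B` has a fractional coordinate `i`,
there is a nonzero direction `d` supported on the fractional coordinates with `c ⬝ᵥ d = 0`: the
basis vector `eᵢ` if `cᵢ = 0`, and otherwise `c_{i'} eᵢ - cᵢ e_{i'}` for a second fractional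
coordinate `i'`, which must exist since otherwise `cᵢ xᵢ = ±xᵢ` would be an integer. Then
`x ± t d ∈ B` for small `t > 0`, so `x` is not extreme.
-/

open Set Filter Topology

theorem eq_convexHull_of_extremePoints_subset {E : Type*} [AddCommGroup E] [Module ℝ E]
    [TopologicalSpace E] [T2Space E] [IsTopologicalAddGroup E] [ContinuousSMul ℝ E]
    [LocallyConvexSpace ℝ E] {s t : Set E} (hs : IsCompact s) (hsc : Convex ℝ s)
    (ht : t.Finite) (hts : t ⊆ s) (hext : s.extremePoints ℝ ⊆ t) :
    s = convexHull ℝ t := by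
  refine (convexHull_min hts hsc).antisymm' ?_
  rw [← closure_convexHull_extremePoints hs hsc]
  exact closure_minimal (convexHull_mono hext) (ht.isClosed_convexHull ℝ)

theorem eq_zero_of_add_mem_of_sub_mem_of_mem_extremePoints {E : Type*} [AddCommGroup E]
    [Module ℝ E] {A : Set E} {x v : E} (hx : x ∈ A.extremePoints ℝ) (hadd : x + v ∈ A)
    (hsub : x - v ∈ A) : v = 0 := by
  have := (mem_extremePoints.1 hx).2 _ hsub _ hadd (mem_openSegment_sub_add x v)
  simpa using this.1

lemma dotp_eq_dotp_iff {N : ℕ} (a b x : Fin N → ℝ) :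
    dotp a x = dotp b x ↔ (a - b) ⬝ᵥ x = 0 := by
  rw [sub_dotProduct, sub_eq_zero]; rfl

lemma unitCube_eq_Icc (N : ℕ) : unitCube N = Icc 0 1 := by
  ext x
  simp [unitCube, Pi.le_def, forall_and]

lemma cubeVerts_finite (N : ℕ) : (cubeVerts N).Finite := by
  have : cubeVerts N = univ.pi fun _ => {0, 1} := by
    ext x
    simp [cubeVerts]
  rw [this]
  exact Finite.pi fun _ => toFinite _

lemma cubeVerts_subset_unitCube (N : ℕ) : cubeVerts N ⊆ unitCube N := by
  intro x hx i
  rcases hx i with h | h <;> simp [h]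

section Slice

variable {N : ℕ} {c x d : Fin N → ℝ}

lemma isCompact_unitCube_slice : IsCompact {x ∈ unitCube N | c ⬝ᵥ x = 0} := by
  rw [unitCube_eq_Icc]
  exact isCompact_Icc.inter_right (isClosed_eq (by fun_prop) continuous_const)

lemma convex_unitCube_slice : Convex ℝ {x ∈ unitCube N | c ⬝ᵥ x = 0} := by
  rw [unitCube_eq_Icc]
  exact (convex_Icc 0 1).inter
    (convex_hyperplane ⟨dotProduct_add c, fun r x => dotProduct_smul r c x⟩ 0)

lemma eventually_add_smul_mem_unitCube (hx : x ∈ unitCube N)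
    (hd : ∀ j, d j ≠ 0 → x j ∈ Ioo 0 1) : ∀ᶠ t in 𝓝 (0 : ℝ), x + t • d ∈ unitCube N := by
  simp only [unitCube, mem_ofPred_eq, eventually_all]
  intro j
  by_cases hdj : d j = 0
  · simp [hdj, hx j]
  · have hlim : Tendsto (fun t : ℝ => x j + t * d j) (𝓝 0) (𝓝 (x j)) :=
      (by fun_prop : Continuous fun t : ℝ => x j + t * d j).tendsto' 0 (x j) (by simp)
    exact (hlim.eventually (isOpen_Ioo.mem_nhds (hd j hdj))).mono
      fun t ht => Ioo_subset_Icc_self ht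

lemma exists_ne_mem_Ioo_of_dotProduct_eq_zero (hc : ∀ i, c i = -1 ∨ c i = 0 ∨ c i = 1)
    (hx : x ∈ unitCube N) (hcx : c ⬝ᵥ x = 0) {i : Fin N} (hi : x i ∈ Ioo 0 1) (hci : c i ≠ 0) :
    ∃ i' ≠ i, x i' ∈ Ioo 0 1 := by
  by_contra! hvert
  set Z := (Int.castRingHom ℝ).range
  have hcZ : ∀ j, c j ∈ Z := fun j => by
    rcases hc j with h | h | h <;> rw [h]
    exacts [Z.neg_mem Z.one_mem, Z.zero_mem, Z.one_mem]
  have hxZ : ∀ j ≠ i, x j ∈ Z := fun j hj => by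
    have : x j ∈ ({0, 1} : Set ℝ) := Icc_sdiff_Ioo_same (zero_le_one' ℝ) ▸ ⟨hx j, hvert j hj⟩
    rcases this with h | h <;> rw [h]
    exacts [Z.zero_mem, Z.one_mem]
  have hcxi : c i * x i ∈ Z := by
    have hrest := Z.sum_mem (t := Finset.univ.erase i) fun j hj =>
      Z.mul_mem (hcZ j) (hxZ j (Finset.ne_of_mem_erase hj))
    rw [dotProduct, ← Finset.add_sum_erase _ _ (Finset.mem_univ i), add_eq_zero_iff_eq_neg] at hcx
    exact hcx ▸ Z.neg_mem hrest
  have hxi : x i ∈ Z := by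
    have hsq : c i * c i = 1 := by rcases hc i with h | h | h <;> simp_all
    simpa [← mul_assoc, hsq] using Z.mul_mem (hcZ i) hcxi
  obtain ⟨m, hm⟩ := hxi
  rw [← hm, eq_intCast, mem_Ioo] at hi
  obtain ⟨h0, h1⟩ := hi
  norm_cast at h0 h1
  omega

lemma exists_dotProduct_eq_zero_of_mem_Ioo (hc : ∀ i, c i = -1 ∨ c i = 0 ∨ c i = 1)
    (hx : x ∈ unitCube N) (hcx : c ⬝ᵥ x = 0) {i : Fin N} (hi : x i ∈ Ioo 0 1) :
    ∃ d ≠ 0, c ⬝ᵥ d = 0 ∧ ∀ j, d j ≠ 0 → x j ∈ Ioo 0 1 := by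
  by_cases hci : c i = 0
  · refine ⟨Pi.single i 1, by simp, by simp [hci], fun j hj => ?_⟩
    obtain rfl : j = i := by by_contra h; simp [h] at hj
    exact hi
  obtain ⟨i', hi'i, hi'⟩ := exists_ne_mem_Ioo_of_dotProduct_eq_zero hc hx hcx hi hci
  refine ⟨c i' • Pi.single i 1 - c i • Pi.single i' 1, fun h => hci ?_, ?_, fun j hj => ?_⟩
  · simpa [hi'i] using congrFun h i'
  · simp only [dotProduct_sub, dotProduct_smul, dotProduct_single, smul_eq_mul]
    ring
  · by_cases hji : j = i
    · exact hji ▸ hi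
    by_cases hji' : j = i'
    · exact hji' ▸ hi'
    simp [hji, hji'] at hj

lemma mem_cubeVerts_of_mem_extremePoints (hc : ∀ i, c i = -1 ∨ c i = 0 ∨ c i = 1)
    (hx : x ∈ extremePoints ℝ {x ∈ unitCube N | c ⬝ᵥ x = 0}) : x ∈ cubeVerts N := by
  intro i
  by_contra! hfrac
  obtain ⟨hxcube, hcx⟩ := extremePoints_subset hx
  have hi : x i ∈ Ioo 0 1 := ⟨(hxcube i).1.lt_of_ne' hfrac.1, (hxcube i).2.lt_of_ne hfrac.2⟩
  obtain ⟨d, hd0, hcd, hsupp⟩ := exists_dotProduct_eq_zero_of_mem_Ioo hc hxcube hcx hi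
  obtain ⟨ε, hε, hball⟩ :=
    Metric.eventually_nhds_iff.1 (eventually_add_smul_mem_unitCube hxcube hsupp)
  have hmem : ∀ t : ℝ, |t| < ε → x + t • d ∈ {x ∈ unitCube N | c ⬝ᵥ x = 0} := fun t ht =>
    ⟨hball (by simpa using ht), by simp [dotProduct_add, dotProduct_smul, hcx, hcd]⟩
  have hε2 : |ε / 2| < ε := by rw [abs_of_pos (half_pos hε)]; exact half_lt_self hε
  have := eq_zero_of_add_mem_of_sub_mem_of_mem_extremePoints hx (hmem _ hε2)
    (by simpa [sub_eq_add_neg] using hmem (-(ε / 2)) (by rwa [abs_neg]))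
  exact hd0 ((smul_eq_zero.1 this).resolve_left (half_pos hε).ne')

theorem unitCube_slice_eq_convexHull (hc : ∀ i, c i = -1 ∨ c i = 0 ∨ c i = 1) :
    {x ∈ unitCube N | c ⬝ᵥ x = 0} = convexHull ℝ {h ∈ cubeVerts N | c ⬝ᵥ h = 0} :=
  eq_convexHull_of_extremePoints_subset isCompact_unitCube_slice convex_unitCube_slice
    ((cubeVerts_finite N).subset inter_subset_left)
    (fun _ ⟨hv, hch⟩ => ⟨cubeVerts_subset_unitCube N hv, hch⟩)
    (fun _ hx => ⟨mem_cubeVerts_of_mem_extremePoints hc hx, (extremePoints_subset hx).2⟩)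

end Slice

theorem stmt_2 {N : ℕ} (xk xj : Fin N → ℝ)
    (hxk : xk ∈ cubeVerts N) (hxj : xj ∈ cubeVerts N) :
    {x ∈ unitCube N | dotp xk x = dotp xj x} =
      convexHull ℝ {h ∈ cubeVerts N | dotp xk h = dotp xj h} := by
  have hc : ∀ i, (xk - xj) i = -1 ∨ (xk - xj) i = 0 ∨ (xk - xj) i = 1 := fun i => by
    rcases hxk i with h | h <;> rcases hxj i with h' | h' <;> simp [h, h']
  simp_rw [dotp_eq_dotp_iff]
  exact unitCube_slice_eq_convexHull hc
end

section
/- Let X ⊆ {0,1}^N be finite and nonempty, x_k ∈ X, z ∈ [0,1]^N with x_k·z > x·z for every x ∈ X with x ≠ x_k, and let h ∈ {0,1}^N be a vertex with x_j·h > x_k·h for some x_j ∈ X. Then there exists μ with 0 < μ < 1 and x_o ∈ X such that for z' = μh + (1-μ)z we have x_k·z' = x_o·z' and x_k·z' ≥ x·z' for all x ∈ X. -/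
lemma dotp_smul_add_smul {N : ℕ} (a h z : Fin N → ℝ) (μ c : ℝ) :
    dotp a (μ • h + c • z) = μ * dotp a h + c * dotp a z := by
  simp only [dotp, Pi.add_apply, Pi.smul_apply, smul_eq_mul, mul_add,
    Finset.sum_add_distrib, Finset.mul_sum]
  congr 1 <;> exact Finset.sum_congr rfl fun i _ => by ring

section Crossing

variable {𝕜 : Type*} [Field 𝕜] [LinearOrder 𝕜] [IsStrictOrderedRing 𝕜]

/-- The parameter `μ` at which the line `μ ↦ μ * a₁ + (1 - μ) * b₁` meets the line
`μ ↦ μ * a₀ + (1 - μ) * b₀`. -/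
def crossing (a₀ b₀ a₁ b₁ : 𝕜) : 𝕜 := (b₀ - b₁) / ((b₀ - b₁) + (a₁ - a₀))

variable {a₀ b₀ a₁ b₁ : 𝕜}

lemma crossing_pos (ha : a₀ < a₁) (hb : b₁ < b₀) : 0 < crossing a₀ b₀ a₁ b₁ := by
  unfold crossing
  apply div_pos <;> linarith

lemma crossing_lt_one (ha : a₀ < a₁) (hb : b₁ < b₀) : crossing a₀ b₀ a₁ b₁ < 1 := by
  unfold crossing
  rw [div_lt_one (by linarith)]
  linarith

lemma mul_crossing (ha : a₀ < a₁) (hb : b₁ < b₀) :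
    crossing a₀ b₀ a₁ b₁ * ((b₀ - b₁) + (a₁ - a₀)) = b₀ - b₁ :=
  div_mul_cancel₀ _ (by linarith)

lemma line_eq_at_crossing (ha : a₀ < a₁) (hb : b₁ < b₀) :
    crossing a₀ b₀ a₁ b₁ * a₀ + (1 - crossing a₀ b₀ a₁ b₁) * b₀ =
      crossing a₀ b₀ a₁ b₁ * a₁ + (1 - crossing a₀ b₀ a₁ b₁) * b₁ := by
  linear_combination -mul_crossing ha hb

lemma line_le_of_le_crossing (ha : a₀ < a₁) (hb : b₁ < b₀) {μ : 𝕜}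
    (hμ : μ ≤ crossing a₀ b₀ a₁ b₁) : μ * a₁ + (1 - μ) * b₁ ≤ μ * a₀ + (1 - μ) * b₀ := by
  have hd : 0 < (b₀ - b₁) + (a₁ - a₀) := by linarith
  have key : μ * ((b₀ - b₁) + (a₁ - a₀)) ≤ b₀ - b₁ :=
    (mul_le_mul_of_nonneg_right hμ hd.le).trans_eq (mul_crossing ha hb)
  linarith

lemma line_le_of_le_of_le (ha : a₁ ≤ a₀) (hb : b₁ ≤ b₀) {μ : 𝕜} (hμ₀ : 0 ≤ μ) (hμ₁ : μ ≤ 1) :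
    μ * a₁ + (1 - μ) * b₁ ≤ μ * a₀ + (1 - μ) * b₀ := by
  gcongr

theorem exists_first_crossing {ι : Type*} {s : Set ι} (hs : s.Finite) (a b : ι → 𝕜) {k : ι}
    (hk : ∀ x ∈ s, x ≠ k → b x < b k) (hbeat : ∃ j ∈ s, a k < a j) :
    ∃ μ : 𝕜, 0 < μ ∧ μ < 1 ∧ ∃ o ∈ s, μ * a k + (1 - μ) * b k = μ * a o + (1 - μ) * b o ∧
      ∀ x ∈ s, μ * a x + (1 - μ) * b x ≤ μ * a k + (1 - μ) * b k := by
  set B := {x ∈ s | a k < a x}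
  have hb_of_mem_B : ∀ x ∈ B, b x < b k := fun x hx => hk x hx.1 (by rintro rfl; exact hx.2.false)
  obtain ⟨o, ho, hmin⟩ := Set.exists_min_image B (fun x => crossing (a k) (b k) (a x) (b x))
    (hs.subset fun x hx => hx.1) hbeat
  have hao := ho.2
  have hbo := hb_of_mem_B o ho
  refine ⟨_, crossing_pos hao hbo, crossing_lt_one hao hbo, o, ho.1,
    line_eq_at_crossing hao hbo, fun x hx => ?_⟩
  by_cases hxB : x ∈ B
  · exact line_le_of_le_crossing hxB.2 (hb_of_mem_B x hxB) (hmin x hxB)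
  · have hax : a x ≤ a k := not_lt.mp fun h => hxB ⟨hx, h⟩
    have hbx : b x ≤ b k := by
      rcases eq_or_ne x k with rfl | hne
      · rfl
      · exact (hk x hx hne).le
    exact line_le_of_le_of_le hax hbx (crossing_pos hao hbo).le (crossing_lt_one hao hbo).le

end Crossing

theorem stmt_19_general {N : ℕ} (X : Set (Fin N → ℝ))
    (hfin : X.Finite) (xk : Fin N → ℝ)
    (z : Fin N → ℝ)
    (hopt : ∀ x ∈ X, x ≠ xk → dotp xk z > dotp x z)
    (h : Fin N → ℝ)
    (hbad : ∃ xj ∈ X, dotp xj h > dotp xk h) :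
    ∃ (μ : ℝ), 0 < μ ∧ μ < 1 ∧ ∃ xo ∈ X,
      dotp xk (μ • h + (1 - μ) • z) = dotp xo (μ • h + (1 - μ) • z) ∧
      ∀ x ∈ X, dotp xk (μ • h + (1 - μ) • z) ≥ dotp x (μ • h + (1 - μ) • z) := by
  simp only [dotp_smul_add_smul]
  exact exists_first_crossing hfin (dotp · h) (dotp · z) hopt hbad

theorem stmt_19 {N : ℕ} (X : Set (Fin N → ℝ)) (hX : X ⊆ cubeVerts N)
    (hfin : X.Finite) (hne : X.Nonempty) (xk : Fin N → ℝ) (hxk : xk ∈ X)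
    (z : Fin N → ℝ) (hz : ∀ i, z i ∈ Set.Icc (0:ℝ) 1)
    (hopt : ∀ x ∈ X, x ≠ xk → dotp xk z > dotp x z)
    (h : Fin N → ℝ) (hh : h ∈ cubeVerts N)
    (hbad : ∃ xj ∈ X, dotp xj h > dotp xk h) :
    ∃ (μ : ℝ), 0 < μ ∧ μ < 1 ∧ ∃ xo ∈ X,
      dotp xk (μ • h + (1 - μ) • z) = dotp xo (μ • h + (1 - μ) • z) ∧
      ∀ x ∈ X, dotp xk (μ • h + (1 - μ) • z) ≥ dotp x (μ • h + (1 - μ) • z) :=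
  stmt_19_general X hfin xk z hopt h hbad
end
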